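/- Let n ≥ 1 and let d₁,…,d_n be integers with d_i ≥ 1. Then in ℚ(X)⟦Y⟧, the n-fold Hadamard product in Y satisfies ⊛_{i=1}^n (1 − X^{1−d_i}Y)/((1−Y)(1−XY)) = ( Σ_{a ∈ Π(S_n)} α(a) · X^{comaj(a)} Y^{des(a)} ) / ((1−Y)(1−XY)(1−X²Y)⋯(1−XⁿY)), where for a = σ₁^{γ₁}⋯σ_n^{γ_n} ∈ Π(S_n) one sets α(a) = Π_{i : γ_i ≠ 0} (−X^{−d_{σ_i}}). (This identity computes, after substituting X ← q and rescaling Y, the class-counting zeta function of a direct product F_{2,d₁} × ⋯ × F_{2,d_n} of free class-2-nilpotent group schemes over a compact discrete valuation ring with odd residue field cardinality q.) -/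

import Mathlib

open scoped Classical

noncomputable section

/-- A coloured permutation: a list of (symbol, colour) pairs. -/
abbrev CPerm : Type := List (ℕ × ℕ)

/-- `a` is a genuine coloured permutation: distinct, positive symbols. -/
def IsCPerm (a : CPerm) : Prop :=
  (a.map Prod.fst).Nodup ∧ ∀ p ∈ a, 0 < p.1

/-- The colour order on coloured integers: `p < q` iff the colour of `p` is bigger
(as an integer), or the colours agree and the symbol of `p` is smaller. -/
def cLt (p q : ℕ × ℕ) : Prop :=
  q.2 < p.2 ∨ (p.2 = q.2 ∧ p.1 < q.1)

instance : DecidableRel cLt := fun p q => by unfold cLt; infer_instance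

/-- The descent set of a coloured permutation (positions `0,…,n−1`; position `i ≥ 1`
is a descent iff the `(i+1)`-st entry is smaller than the `i`-th entry (1-indexed)
in the colour order; `0` is a descent iff the first colour is nonzero). -/
def DesSet (a : CPerm) : Finset ℕ :=
  (Finset.range a.length).filter fun i =>
    if i = 0 then (a.getD 0 (0, 0)).2 ≠ 0
    else cLt (a.getD i (0, 0)) (a.getD (i - 1) (0, 0))

/-- Descent number. -/
def des (a : CPerm) : ℕ := (DesSet a).card

/-- Comajor index. -/
def comaj (a : CPerm) : ℕ := ∑ i ∈ DesSet a, (a.length - i)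

/-- `colVec a j` is the number of entries of `a` of colour `j`. -/
def colVec (a : CPerm) (j : ℕ) : ℕ := (a.map Prod.snd).count j

/-- The multiset of shuffles of two lists. -/
def shuffles {α : Type*} : List α → List α → Multiset (List α)
  | [], bs => {bs}
  | a :: as, [] => {a :: as}
  | a :: as, b :: bs =>
      ((shuffles as (b :: bs)).map (a :: ·)) + ((shuffles (a :: as) bs).map (b :: ·))
  termination_by as bs => as.length + bs.length

/-- The set of symbols of a coloured permutation. -/
def symbols (a : CPerm) : Finset ℕ := (a.map Prod.fst).toFinset

/-- The set of nonzero colours of a coloured permutation. -/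
def paletteStar (a : CPerm) : Finset ℕ := ((a.map Prod.snd).toFinset).erase 0

/-- Two coloured permutations are symbol-disjoint if they share no symbols. -/
def SymbolDisjoint (a b : CPerm) : Prop := Disjoint (symbols a) (symbols b)

/-- `a` is `r`-coloured: all colours lie in `{0,…,r−1}`. -/
def RColoured (r : ℕ) (a : CPerm) : Prop := ∀ p ∈ a, p.2 < r

/-- Symbols of a coloured configuration (= multiset of coloured permutations). -/
def msymbols (f : Multiset CPerm) : Finset ℕ := (f.map symbols).sup

/-- `palette*` of a coloured configuration. -/
def mpalette (f : Multiset CPerm) : Finset ℕ := (f.map paletteStar).sup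

/-- The shuffle of two coloured configurations (bi-additive extension). -/
def mshuffle (f g : Multiset CPerm) : Multiset CPerm :=
  f.bind fun a => g.bind fun b => shuffles a b

/-- Hadamard product of formal power series. -/
def hadamard {R : Type*} [Semiring R] (A B : PowerSeries R) : PowerSeries R :=
  PowerSeries.mk fun k => (PowerSeries.coeff (R := R) k) A * (PowerSeries.coeff (R := R) k) B

/-- The geometric series `1/(1 − c·Y) = Σ_k c^k Y^k`. -/
def geom {R : Type*} [Semiring R] (c : R) : PowerSeries R :=
  PowerSeries.mk fun k => c ^ k

/-- The field ℚ(X) of rational functions. -/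
abbrev K : Type := RatFunc ℚ

/-- The variable X of ℚ(X). -/
def XX : K := RatFunc.X

/-- Membership in `U = {±X^k : k ∈ ℤ}`. -/
def InU (u : K) : Prop := ∃ k : ℤ, u = XX ^ k ∨ u = -XX ^ k

/-- `α(a) = Π_i α(γ_i)`. -/
def alphaProd (α : ℕ → K) (a : CPerm) : K := (a.map fun p => α p.2).prod

/-- The summand of `W^ε_{f,α}` corresponding to a single coloured permutation. -/
def Wterm (ε : ℤ) (α : ℕ → K) (a : CPerm) : PowerSeries K :=
  PowerSeries.C (R := K) (alphaProd α a * XX ^ (ε * (comaj a : ℤ))) * PowerSeries.X ^ des a *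
    ∏ i ∈ Finset.range (a.length + 1), geom (XX ^ (ε * (i : ℤ)))

/-- `W^ε_{f,α} = Σ_a f_a α(a) X^{ε·comaj(a)} Y^{des(a)} / ((1−Y)⋯(1−X^{ε|a|}Y))`. -/
def W (ε : ℤ) (α : ℕ → K) (f : Multiset CPerm) : PowerSeries K :=
  (f.map (Wterm ε α)).sum

/-- `(f,α)` is a labelled coloured configuration. -/
def IsLCC (f : Multiset CPerm) (α : ℕ → K) : Prop :=
  (∀ a ∈ f, IsCPerm a) ∧ (∀ c, InU (α c)) ∧ (∀ c ∉ mpalette f, α c = 1)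


/-- The set `Π(S_n)` of all `2^n · n!` coloured permutations `σ₁^{γ₁}⋯σ_n^{γ_n}`
with `σ₁⋯σ_n` a permutation of `[n]` and `γ_i ∈ {0, σ_i}`. -/
def PiSn (n : ℕ) : Multiset CPerm :=
  (Finset.univ : Finset (Equiv.Perm (Fin n) × (Fin n → Bool))).val.map fun sg =>
    List.ofFn fun i : Fin n =>
      ((sg.1 i : ℕ) + 1, if sg.2 i then (sg.1 i : ℕ) + 1 else 0)

/-- `α(a) = Π_{i : γ_i ≠ 0} (−X^{−d_{σ_i}})`. -/
def alphaD (d : ℕ → ℕ) (a : CPerm) : K :=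
  (a.map fun p => if p.2 ≠ 0 then -XX ^ (-(d p.1 : ℤ)) else (1 : K)).prod

/-- The iterated (`n`-fold) Hadamard product of a list of power series
(the all-ones series `1/(1−Y)` is the Hadamard identity). -/
def hadamardProdList {R : Type*} [Semiring R] (l : List (PowerSeries R)) :
    PowerSeries R :=
  l.foldr hadamard (geom 1)

/-!
Induction on `n`, writing `Gₙ = ∏_{i ≤ n} 1/(1 - XⁱY)`. By partial fractions the kernel
`(1 - cY)/((1 - Y)(1 - XY))` is a combination of `1/(1 - Y)` and `1/(1 - XY)`, whose Hadamard
products with a series `A(Y)` are `A(Y)` and `A(XY)`; hence the Hadamard product of the kernel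
with `Yˢ Gₙ` is `Yˢ Gₙ₊₁` times an explicit polynomial of degree one in `Y`
(`hadamard_X_pow_mul_geomProd`).

On the combinatorial side, every element of `Π(S_{n+1})` arises exactly once by inserting the
letter `(n+1)⁰` or `(n+1)^{n+1}` into one of the `n + 1` slots of an element `a` of `Π(S_n)`; in
the colour order the first letter is above, the second below every letter of `a`. As the slot
varies, `insertionShift` runs through `0, …, n` exactly once; the insertion raises `comaj` by it
(by it plus one for the lower letter) and raises `des` by one exactly when it exceeds `des a`
(is at least `des a`). Summing the weights of the insertions of `a` therefore reproduces the same
polynomial.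
-/

open PowerSeries Finset

section Hadamard

variable {R : Type*}

@[simp]
lemma coeff_hadamard [Semiring R] (A B : R⟦X⟧) (k : ℕ) :
    coeff k (hadamard A B) = coeff k A * coeff k B := by
  simp [hadamard]

@[simp]
lemma coeff_geom [Semiring R] (c : R) (k : ℕ) : coeff k (geom c) = c ^ k := by
  simp [geom]

lemma coeff_hadamardProdList [Semiring R] (l : List R⟦X⟧) (k : ℕ) :
    coeff k (hadamardProdList l) = (l.map (coeff k)).prod := by
  induction l with
  | nil => simp [hadamardProdList]
  | cons A l ih => simp [hadamardProdList, ← ih]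

lemma hadamardProdList_append_singleton [Semiring R] (l : List R⟦X⟧) (A : R⟦X⟧) :
    hadamardProdList (l ++ [A]) = hadamard (hadamardProdList l) A := by
  ext k
  simp [coeff_hadamardProdList]

lemma hadamard_comm [CommSemiring R] (A B : R⟦X⟧) : hadamard A B = hadamard B A := by
  ext k
  simp [mul_comm]

lemma sub_hadamard [Ring R] (A B G : R⟦X⟧) :
    hadamard (A - B) G = hadamard A G - hadamard B G := by
  ext k
  simp [sub_mul]

lemma C_mul_hadamard [Semiring R] (c : R) (A B : R⟦X⟧) :
    hadamard (C c * A) B = C c * hadamard A B := by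
  ext k
  simp [mul_assoc]

lemma multiset_sum_hadamard {ι : Type*} [Semiring R] (s : Multiset ι) (f : ι → R⟦X⟧)
    (B : R⟦X⟧) : hadamard (s.map f).sum B = (s.map fun i => hadamard (f i) B).sum := by
  induction s using Multiset.induction_on with
  | empty => ext k; simp
  | cons i s ih => ext k; simp [← ih, add_mul]

lemma geom_hadamard [CommSemiring R] (c : R) (A : R⟦X⟧) : hadamard (geom c) A = rescale c A := by
  ext k
  simp [coeff_rescale]

end Hadamard

section GeomProd

variable {R : Type*} [CommRing R] (q : R)

lemma geom_mul_one_sub (c : R) : geom c * (1 - C c * X) = 1 := by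
  ext k
  cases k with
  | zero => simp [geom]
  | succ k => simp [mul_sub, ← mul_assoc, mul_comm _ (C c), pow_succ, mul_comm c]

def geomProd (n : ℕ) : R⟦X⟧ := ∏ i ∈ range (n + 1), geom (q ^ i)

lemma geomProd_eq_geomProd_succ_mul (n : ℕ) :
    geomProd q n = geomProd q (n + 1) * (1 - C (q ^ (n + 1)) * X) := by
  rw [geomProd, geomProd, prod_range_succ _ (n + 1), mul_assoc, geom_mul_one_sub, mul_one]

lemma rescale_geomProd (n : ℕ) : rescale q (geomProd q n) = geomProd q (n + 1) * (1 - X) := by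
  have rescale_geom (c : R) : rescale q (geom c) = geom (q * c) := by
    ext k
    simp [coeff_rescale, mul_pow]
  have geom_one : geom (1 : R) * (1 - X) = 1 := by simpa using geom_mul_one_sub (1 : R)
  simp only [geomProd, map_prod, rescale_geom, ← pow_succ']
  rw [prod_range_succ' _ (n + 1), pow_zero, mul_assoc, geom_one, mul_one]

def stairSum (n t : ℕ) : R⟦X⟧ := ∑ r ∈ range (n + 1), C (q ^ r) * if r < t then 1 else X

lemma C_one_sub_mul_stairSum {n t : ℕ} (ht : t ≤ n + 1) :
    C (1 - q) * stairSum q n t = 1 - C (q ^ (n + 1)) * X - C (q ^ t) * (1 - X) := by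
  have low : ∑ r ∈ range t, C (q ^ r) * (if r < t then 1 else X) = C (∑ r ∈ range t, q ^ r) := by
    rw [map_sum]
    exact sum_congr rfl fun r hr => by simp [mem_range.1 hr]
  have high : ∑ r ∈ Ico t (n + 1), C (q ^ r) * (if r < t then 1 else X) =
      C (∑ r ∈ Ico t (n + 1), q ^ r) * X := by
    rw [map_sum, sum_mul]
    exact sum_congr rfl fun r hr => by simp [(mem_Ico.1 hr).1]
  have hlow := congrArg C (geom_sum_mul_neg q t)
  have hhigh := congrArg C (geom_sum_Ico_mul_neg q ht)
  rw [stairSum, ← sum_range_add_sum_Ico _ ht, low, high]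
  simp only [map_sub, map_one, map_mul] at *
  linear_combination hlow + X * hhigh

lemma partialFractions_geom_one_mul_geom (c : R) :
    C (1 - q) * ((1 - C c * X) * geom 1 * geom q) = C (1 - c) * geom 1 - C (q - c) * geom q := by
  have h1 := geom_mul_one_sub (1 : R)
  have hq := geom_mul_one_sub q
  simp only [map_sub, map_one] at *
  linear_combination (1 - C c) * geom (1 : R) * hq - (C q - C c) * geom q * h1

lemma hadamard_X_pow_mul_geomProd [IsDomain R] (hq : q ≠ 1) {n s : ℕ} (hs : s ≤ n) (c : R) :
    hadamard (X ^ s * geomProd q n) ((1 - C c * X) * geom 1 * geom q) =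
      X ^ s * geomProd q (n + 1) * (stairSum q n (s + 1) - C c * stairSum q n s) := by
  have hC : (C (1 - q) : R⟦X⟧) ≠ 0 := by
    rw [Ne, map_eq_zero_iff _ (C_injective), sub_eq_zero]
    exact hq.symm
  apply mul_left_cancel₀ hC
  have h0 := C_one_sub_mul_stairSum q (n := n) (t := s) (by omega)
  have h1 := C_one_sub_mul_stairSum q (n := n) (t := s + 1) (by omega)
  rw [hadamard_comm, ← C_mul_hadamard, partialFractions_geom_one_mul_geom, sub_hadamard,
    C_mul_hadamard, C_mul_hadamard, geom_hadamard, geom_hadamard, rescale_one,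
    RingHom.id_apply, map_mul, map_pow, rescale_X, rescale_geomProd,
    geomProd_eq_geomProd_succ_mul q n]
  simp only [map_sub, map_one, map_pow] at *
  linear_combination (-(X ^ s * geomProd q (n + 1))) * (h1 - C c * h0)

end GeomProd

section Rank

variable {α M : Type*} [LinearOrder α] [AddCommMonoid M]

lemma sum_card_filter_lt (S : Finset α) (f : ℕ → M) :
    ∑ j ∈ S, f #{i ∈ S | i < j} = ∑ r ∈ range #S, f r := by
  induction S using Finset.induction_on_max with
  | empty => simp
  | insert a S hlt ih =>
    have ha : a ∉ S := fun h => lt_irrefl a (hlt a h)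
    have top : {i ∈ insert a S | i < a} = S := by
      rw [filter_insert, if_neg (lt_irrefl a)]
      exact filter_true_of_mem hlt
    have below : ∀ j ∈ S, {i ∈ insert a S | i < j} = {i ∈ S | i < j} := fun j hj => by
      rw [filter_insert, if_neg (hlt j hj).not_gt]
    rw [sum_insert ha, top, sum_congr rfl fun j hj => by rw [below j hj], ih,
      card_insert_of_notMem ha, sum_range_succ, add_comm]

lemma sum_card_filter_gt (S : Finset α) (f : ℕ → M) :
    ∑ j ∈ S, f #{i ∈ S | j < i} = ∑ r ∈ range #S, f r :=
  sum_card_filter_lt (α := αᵒᵈ) S f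

end Rank

section InsertionShift

/-- Increase of `comaj` when a new extreme letter is inserted into slot `j` of a word of length
`n` with descent set `D`. -/
def insertionShift (n : ℕ) (D : Finset ℕ) (j : ℕ) : ℕ :=
  #{i ∈ D | i < j} + if j ∈ D then 0 else n - j

variable {n j : ℕ} {D : Finset ℕ}

lemma insertionShift_lt_card_of_mem (hj : j ∈ D) : insertionShift n D j < #D := by
  rw [insertionShift, if_pos hj, add_zero]
  exact card_lt_card (filter_ssubset.2 ⟨j, hj, lt_irrefl j⟩)

lemma insertionShift_self (hD : D ⊆ range n) : insertionShift n D n = #D := by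
  rw [insertionShift, Nat.sub_self, ite_self, add_zero,
    filter_true_of_mem fun i hi => mem_range.1 (hD hi)]

lemma insertionShift_of_notMem (hD : D ⊆ range n) (hjD : j ∉ D) (hjn : j < n) :
    insertionShift n D j = #D + 1 + #{i ∈ range n \ D | j < i} := by
  have below_above : #{i ∈ D | i < j} + #{i ∈ D | j < i} = #D := by
    rw [← card_union_of_disjoint (disjoint_filter.2 fun i _ h1 h2 => lt_asymm h1 h2), ← filter_or,
      filter_true_of_mem fun i hi => lt_or_gt_of_ne (ne_of_mem_of_not_mem hi hjD)]
  have above : #{i ∈ D | j < i} + #{i ∈ range n \ D | j < i} = n - j - 1 := by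
    rw [← card_union_of_disjoint (disjoint_filter_filter disjoint_sdiff), ← filter_union,
      union_sdiff_of_subset hD, ← Nat.card_Ioo]
    congr 1
    ext i
    simp [and_comm]
  rw [insertionShift, if_neg hjD]
  omega

lemma sum_insertionShift {M : Type*} [AddCommMonoid M] (hD : D ⊆ range n) (f : ℕ → M) :
    ∑ j ∈ range (n + 1), f (insertionShift n D j) = ∑ r ∈ range (n + 1), f r := by
  have hn : n ∉ D := fun h => lt_irrefl n (mem_range.1 (hD h))
  have hcard : #D ≤ n := by simpa using card_le_card hD
  have split : range (n + 1) = insert n D ∪ (range n \ D) := by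
    ext i
    by_cases hiD : i ∈ D
    · simp [hiD, (mem_range.1 (hD hiD)).trans (Nat.lt_succ_self n)]
    · simp [hiD]
      omega
  have low : ∑ j ∈ insert n D, f (insertionShift n D j) =
      ∑ j ∈ insert n D, f #{i ∈ insert n D | i < j} := by
    refine sum_congr rfl fun j hj => ?_
    have hjn : j ≤ n := (mem_insert.1 hj).elim le_of_eq fun h => (mem_range.1 (hD h)).le
    rw [insertionShift, filter_insert, if_neg (not_lt.2 hjn)]
    rcases mem_insert.1 hj with rfl | hjD
    · rw [Nat.sub_self, ite_self, add_zero]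
    · rw [if_pos hjD, add_zero]
  have high : ∑ j ∈ range n \ D, f (insertionShift n D j) =
      ∑ j ∈ range n \ D, f (#D + 1 + #{i ∈ range n \ D | j < i}) := by
    refine sum_congr rfl fun j hj => ?_
    rw [insertionShift_of_notMem hD (mem_sdiff.1 hj).2 (mem_range.1 (mem_sdiff.1 hj).1)]
  conv_lhs => rw [split]
  rw [sum_union (disjoint_insert_left.2 ⟨by simp, disjoint_sdiff⟩), low, high, sum_card_filter_lt,
    sum_card_filter_gt (f := fun r => f (#D + 1 + r)), card_insert_of_notMem hn,
    card_sdiff_of_subset hD, card_range, ← sum_range_add]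
  congr 2
  omega

lemma insertionShift_lt_card_iff (hD : D ⊆ range n) (hj : j ≤ n) :
    insertionShift n D j < #D ↔ j ∈ D := by
  refine ⟨fun h => ?_, insertionShift_lt_card_of_mem⟩
  by_contra hjD
  rcases hj.lt_or_eq with hjn | rfl
  · rw [insertionShift_of_notMem hD hjD hjn] at h
    omega
  · rw [insertionShift_self hD] at h
    exact lt_irrefl _ h

lemma insertionShift_le_card_iff (hD : D ⊆ range n) (hj : j ≤ n) :
    insertionShift n D j ≤ #D ↔ j ∈ D ∨ j = n := by
  refine ⟨fun h => ?_, ?_⟩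
  · by_contra hjD
    push Not at hjD
    rw [insertionShift_of_notMem hD hjD.1 (lt_of_le_of_ne hj hjD.2)] at h
    omega
  · rintro (hjD | rfl)
    exacts [(insertionShift_lt_card_of_mem hjD).le, (insertionShift_self hD).le]

end InsertionShift

section Lists

lemma getD_insertIdx {α : Type*} {l : List α} {x d : α} {j : ℕ} (hj : j ≤ l.length) (i : ℕ) :
    (l.insertIdx j x).getD i d =
      if i < j then l.getD i d else if i = j then x else l.getD (i - 1) d := by
  simp only [List.getD_eq_getElem?_getD, List.getElem?_insertIdx]
  split_ifs <;> simp_all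

lemma getD_mem_cons {α : Type*} (l : List α) (d : α) (i : ℕ) : l.getD i d ∈ d :: l := by
  rcases lt_or_ge i l.length with h | h
  · exact List.mem_cons_of_mem _ (List.getD_eq_getElem _ _ h ▸ List.getElem_mem h)
  · exact List.getD_eq_default _ _ h ▸ List.mem_cons_self

lemma getD_cons_mem_cons {α : Type*} (l : List α) (d : α) (i : ℕ) : (d :: l).getD i d ∈ d :: l := by
  rcases i with _ | i
  exacts [List.mem_cons_self, getD_mem_cons l d i]

lemma insertIdx_inj_of_forall_not {α : Type*} {P : α → Prop} {l l' : List α} {x x' : α} {j j' : ℕ}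
    (hj : j ≤ l.length) (hj' : j' ≤ l'.length) (hx : P x) (hx' : P x') (hl : ∀ y ∈ l, ¬ P y)
    (hl' : ∀ y ∈ l', ¬ P y) (h : l.insertIdx j x = l'.insertIdx j' x') :
    j = j' ∧ x = x' ∧ l = l' := by
  have no_earlier : ∀ {l l' : List α} {x x' : α} {j j' : ℕ}, j ≤ l.length → P x →
      (∀ y ∈ l', ¬ P y) → l.insertIdx j x = l'.insertIdx j' x' → ¬ j < j' := by
    intro l l' x x' j j' hj hx hl' h hlt
    have := congrArg (·[j]?) h
    simp only [List.getElem?_insertIdx_self, if_pos hj, List.getElem?_insertIdx_of_lt hlt] at this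
    exact hl' x (List.mem_of_getElem? this.symm) hx
  obtain rfl : j = j' :=
    le_antisymm (not_lt.1 (no_earlier hj' hx' hl h.symm)) (not_lt.1 (no_earlier hj hx hl' h))
  obtain rfl : x = x' := by
    simpa [List.getElem?_insertIdx_self, hj, hj'] using congrArg (·[j]?) h
  exact ⟨rfl, rfl, by simpa using congrArg (·.eraseIdx j) h⟩

end Lists

section SlotShift

def slotShift (k i : ℕ) : ℕ := if i < k then i else i + 1

lemma slotShift_injective (k : ℕ) : Function.Injective (slotShift k) := by
  intro i i' h
  simp only [slotShift] at h
  split_ifs at h <;> omega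

lemma mem_image_slotShift {E : Finset ℕ} {k i : ℕ} :
    i ∈ E.image (slotShift k) ↔ (i < k ∧ i ∈ E) ∨ (k < i ∧ i - 1 ∈ E) := by
  simp only [mem_image, slotShift]
  constructor
  · rintro ⟨m, hm, rfl⟩
    split_ifs with h
    · exact Or.inl ⟨h, hm⟩
    · exact Or.inr ⟨by omega, by simpa using hm⟩
  · rintro (⟨h, hi⟩ | ⟨h, hi⟩)
    · exact ⟨i, hi, if_pos h⟩
    · exact ⟨i - 1, hi, by rw [if_neg (by omega)]; omega⟩

lemma sum_image_slotShift {E : Finset ℕ} {n : ℕ} (hE : ∀ i ∈ E, i ≤ n) (k : ℕ) :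
    ∑ i ∈ E.image (slotShift k), (n + 1 - i) = ∑ i ∈ E, (n - i) + #{i ∈ E | i < k} := by
  rw [sum_image fun i _ i' _ h => slotShift_injective k h, card_filter, ← sum_add_distrib]
  refine sum_congr rfl fun i hi => ?_
  have := hE i hi
  simp only [slotShift]
  split_ifs <;> omega

end SlotShift

section Descents

lemma cLt_asymm {p q : ℕ × ℕ} (h : cLt p q) : ¬ cLt q p := by
  unfold cLt at *
  omega

/-- The convention that `0` is a descent iff the first colour is nonzero amounts to comparing the
first letter with a sentinel letter `(0, 0)` in front of the word. -/
lemma mem_DesSet {a : CPerm} {i : ℕ} :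
    i ∈ DesSet a ↔ i < a.length ∧ cLt (a.getD i (0, 0)) (((0, 0) :: a).getD i (0, 0)) := by
  rcases i with _ | i
  · simp [DesSet, cLt, Nat.pos_iff_ne_zero]
  · simp [DesSet]

lemma DesSet_subset_range (a : CPerm) : DesSet a ⊆ range a.length := filter_subset _ _

variable {a : CPerm} {x : ℕ × ℕ} {j : ℕ}

lemma DesSet_insertIdx_of_max (hj : j ≤ a.length) (hx : ∀ p ∈ (0, 0) :: a, cLt p x) :
    DesSet (a.insertIdx j x) = {i ∈ insert j (DesSet a) | i < a.length}.image (slotShift j) := by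
  ext i
  rw [mem_DesSet, mem_image_slotShift, List.length_insertIdx_of_le_length hj,
    ← List.insertIdx_succ_cons, getD_insertIdx hj, getD_insertIdx (by simpa using hj)]
  simp only [mem_filter, mem_insert]
  -- Below `j` nothing changes, at `j` and `j + 1` the new letter meets its neighbours, and beyond
  -- `j + 1` the old comparisons reappear shifted by one.
  obtain hij | rfl | rfl | hij : i < j ∨ i = j ∨ i = j + 1 ∨ j + 1 < i := by omega
  · simp (disch := omega) only [if_pos, mem_DesSet]
    grind
  · have := cLt_asymm (hx _ (getD_cons_mem_cons a (0, 0) i))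
    simp (disch := omega) only [if_neg, ↓reduceIte]
    grind
  · have := hx _ (getD_mem_cons a (0, 0) j)
    simp (disch := omega) only [if_neg, ↓reduceIte, Nat.add_sub_cancel]
    grind
  · simp (disch := omega) only [if_neg, mem_DesSet]
    grind

lemma DesSet_insertIdx_of_min (hj : j ≤ a.length) (hx : ∀ p ∈ (0, 0) :: a, cLt x p) :
    DesSet (a.insertIdx j x) = (insert j (DesSet a)).image (slotShift (j + 1)) := by
  ext i
  rw [mem_DesSet, mem_image_slotShift, List.length_insertIdx_of_le_length hj,
    ← List.insertIdx_succ_cons, getD_insertIdx hj, getD_insertIdx (by simpa using hj)]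
  simp only [mem_insert]
  obtain hij | rfl | rfl | hij : i < j ∨ i = j ∨ i = j + 1 ∨ j + 1 < i := by omega
  · simp (disch := omega) only [if_pos, mem_DesSet]
    grind
  · have := hx _ (getD_cons_mem_cons a (0, 0) i)
    simp (disch := omega) only [if_neg, ↓reduceIte]
    grind
  · have := cLt_asymm (hx _ (getD_mem_cons a (0, 0) j))
    simp (disch := omega) only [if_neg, ↓reduceIte, Nat.add_sub_cancel]
    grind
  · simp (disch := omega) only [if_neg, mem_DesSet]
    grind

end Descents

section InsertionStatistics

variable {a : CPerm} {n j : ℕ} (hlen : a.length = n) (hj : j ≤ n)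
include hlen hj

lemma des_comaj_insertIdx_of_max {x : ℕ × ℕ} (hx : ∀ p ∈ (0, 0) :: a, cLt p x) :
    des (a.insertIdx j x) = des a + (if j ∈ DesSet a ∨ j = n then 0 else 1) ∧
      comaj (a.insertIdx j x) = comaj a + insertionShift n (DesSet a) j := by
  have hD : DesSet a ⊆ range n := hlen ▸ DesSet_subset_range a
  rw [des, des, comaj, comaj, DesSet_insertIdx_of_max (hlen ▸ hj) hx,
    card_image_of_injective _ (slotShift_injective j),
    List.length_insertIdx_of_le_length (hlen ▸ hj), hlen,
    sum_image_slotShift (fun i hi => (mem_filter.1 hi).2.le), insertionShift]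
  by_cases hjD : j ∈ DesSet a ∨ j = n
  · have hE : {i ∈ insert j (DesSet a) | i < n} = DesSet a := by
      rcases hjD with hjD | rfl
      · rw [insert_eq_of_mem hjD, filter_true_of_mem fun i hi => mem_range.1 (hD hi)]
      · rw [filter_insert, if_neg (lt_irrefl j), filter_true_of_mem fun i hi => mem_range.1 (hD hi)]
    rw [hE, if_pos hjD]
    refine ⟨rfl, ?_⟩
    rcases hjD with hjD | rfl
    · rw [if_pos hjD, add_zero]
    · rw [Nat.sub_self, ite_self, add_zero]
  · push Not at hjD
    have hjn : j < n := lt_of_le_of_ne hj hjD.2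
    have hE : {i ∈ insert j (DesSet a) | i < n} = insert j (DesSet a) :=
      filter_true_of_mem fun i hi => (mem_insert.1 hi).elim (· ▸ hjn) fun h => mem_range.1 (hD h)
    rw [hE, if_neg (by tauto), if_neg hjD.1, card_insert_of_notMem hjD.1, sum_insert hjD.1,
      filter_insert, if_neg (lt_irrefl j)]
    exact ⟨rfl, by ring⟩

lemma des_comaj_insertIdx_of_min {x : ℕ × ℕ} (hx : ∀ p ∈ (0, 0) :: a, cLt x p) :
    des (a.insertIdx j x) = des a + (if j ∈ DesSet a then 0 else 1) ∧
      comaj (a.insertIdx j x) = comaj a + insertionShift n (DesSet a) j + 1 := by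
  have hD : DesSet a ⊆ range n := hlen ▸ DesSet_subset_range a
  have hle : ∀ i ∈ insert j (DesSet a), i ≤ n := fun i hi =>
    (mem_insert.1 hi).elim (· ▸ hj) fun h => (mem_range.1 (hD h)).le
  have hbelow : #{i ∈ insert j (DesSet a) | i < j + 1} = #{i ∈ DesSet a | i < j} + 1 := by
    have : {i ∈ insert j (DesSet a) | i < j + 1} = insert j {i ∈ DesSet a | i < j} := by
      ext i
      by_cases hi : i = j
      · simp [hi]
      · simp only [mem_filter, mem_insert, hi, false_or]
        exact and_congr_right fun _ => by omega
    rw [this, card_insert_of_notMem]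
    simp
  rw [des, des, comaj, comaj, DesSet_insertIdx_of_min (hlen ▸ hj) hx,
    card_image_of_injective _ (slotShift_injective _),
    List.length_insertIdx_of_le_length (hlen ▸ hj), hlen, sum_image_slotShift hle, hbelow,
    insertionShift]
  by_cases hjD : j ∈ DesSet a
  · rw [insert_eq_of_mem hjD, if_pos hjD, if_pos hjD]
    exact ⟨rfl, by ring⟩
  · rw [card_insert_of_notMem hjD, sum_insert hjD, if_neg hjD, if_neg hjD]
    exact ⟨rfl, by ring⟩

end InsertionStatistics

section SignedPermutations

lemma mem_PiSn_iff {N : ℕ} {a : CPerm} :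
    a ∈ PiSn N ↔
      a.length = N ∧ (a.map Prod.fst).Nodup ∧
        ∀ p ∈ a, 0 < p.1 ∧ p.1 ≤ N ∧ (p.2 = 0 ∨ p.2 = p.1) := by
  constructor
  · rw [PiSn, Multiset.mem_map]
    rintro ⟨⟨σ, g⟩, -, rfl⟩
    refine ⟨List.length_ofFn, ?_, ?_⟩
    · rw [List.map_ofFn, List.nodup_ofFn]
      intro i i' h
      exact σ.injective (Fin.ext (by simpa using h))
    · intro p hp
      obtain ⟨i, rfl⟩ := List.mem_ofFn.1 hp
      cases g i <;> simp
  · rintro ⟨rfl, hnd, hent⟩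
    have hmem (i : ℕ) (hi : i < a.length) := hent _ (List.getElem_mem hi)
    let f : Fin a.length → Fin a.length := fun i => ⟨a[(i : ℕ)].1 - 1, by have := hmem i i.2; omega⟩
    have hf : Function.Injective f := fun i i' h => by
      have := hmem i i.2
      have := hmem i' i'.2
      have hfst : (a.map Prod.fst)[(i : ℕ)]'(by simp) = (a.map Prod.fst)[(i' : ℕ)]'(by simp) := by
        simp only [List.getElem_map]
        simp only [f, Fin.mk.injEq] at h
        omega
      exact Fin.ext (hnd.getElem_inj_iff.1 hfst)
    rw [PiSn, Multiset.mem_map]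
    refine ⟨(Equiv.ofBijective f hf.bijective_of_finite, fun i => decide (a[(i : ℕ)].2 ≠ 0)),
      mem_univ _, List.ext_getElem (by simp) fun i _ hi => ?_⟩
    obtain ⟨h1, -, h3⟩ := hmem i hi
    simp only [List.getElem_ofFn, Equiv.ofBijective_apply, f, decide_eq_true_eq]
    ext
    · dsimp only
      omega
    · dsimp only
      split_ifs <;> grind

lemma PiSn_nodup (N : ℕ) : (PiSn N).Nodup := by
  refine Multiset.Nodup.map (fun sg sg' h => ?_) (univ : Finset _).nodup
  have hentry (i : Fin N) := congrFun (List.ofFn_inj.1 h) i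
  have hσ : sg.1 = sg'.1 := Equiv.ext fun i => Fin.ext (by simpa using congrArg Prod.fst (hentry i))
  refine Prod.ext hσ (funext fun i => ?_)
  have := congrArg Prod.snd (hentry i)
  rw [hσ] at this
  cases hg : sg.2 i <;> cases hg' : sg'.2 i <;> simp_all

lemma card_PiSn (N : ℕ) : Multiset.card (PiSn N) = N.factorial * 2 ^ N := by
  simp [PiSn, Fintype.card_perm]

lemma PiSn_zero : PiSn 0 = {[]} := by
  simp [PiSn]

def insertions (n : ℕ) (a : CPerm) : Multiset CPerm :=
  (range (n + 1) ×ˢ ({0, n + 1} : Finset ℕ)).val.map fun jc => a.insertIdx jc.1 (n + 1, jc.2)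

variable {n : ℕ}

lemma card_insertions (a : CPerm) : Multiset.card (insertions n a) = (n + 1) * 2 := by
  simp [insertions]
  omega

lemma insertIdx_mem_PiSn {a : CPerm} (ha : a ∈ PiSn n) {j c : ℕ} (hj : j ≤ n)
    (hc : c ∈ ({0, n + 1} : Finset ℕ)) : a.insertIdx j (n + 1, c) ∈ PiSn (n + 1) := by
  obtain ⟨rfl, hnd, hent⟩ := mem_PiSn_iff.1 ha
  refine mem_PiSn_iff.2 ⟨List.length_insertIdx_of_le_length hj _, ?_, fun p hp => ?_⟩
  · rw [List.map_insertIdx]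
    refine (List.perm_insertIdx _ _ (by simpa using hj)).nodup_iff.2 (List.nodup_cons.2 ⟨?_, hnd⟩)
    intro h
    obtain ⟨p, hp, hp1⟩ := List.mem_map.1 h
    have := hent p hp
    omega
  · rcases (List.mem_insertIdx hj).1 hp with rfl | hp
    · simp only [mem_insert, mem_singleton] at hc
      omega
    · have := hent p hp
      omega

lemma insertIdx_inj_of_mem_PiSn {a a' : CPerm} (ha : a ∈ PiSn n) (ha' : a' ∈ PiSn n)
    {j j' c c' : ℕ} (hj : j ≤ n) (hj' : j' ≤ n)
    (h : a.insertIdx j (n + 1, c) = a'.insertIdx j' (n + 1, c')) : j = j' ∧ c = c' ∧ a = a' := by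
  obtain ⟨rfl, -, hent⟩ := mem_PiSn_iff.1 ha
  obtain ⟨hlen', -, hent'⟩ := mem_PiSn_iff.1 ha'
  obtain ⟨hjj, hcc, haa⟩ := insertIdx_inj_of_forall_not (P := fun p => p.1 = a.length + 1) hj
    (hlen' ▸ hj') rfl rfl (fun p hp => by have := hent p hp; omega)
    (fun p hp => by have := hent' p hp; omega) h
  exact ⟨hjj, congrArg Prod.snd hcc, haa⟩

lemma PiSn_succ (n : ℕ) : PiSn (n + 1) = (PiSn n).bind (insertions n) := by
  have mem_insertions {a b : CPerm} (hb : b ∈ insertions n a) :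
      ∃ j ≤ n, ∃ c ∈ ({0, n + 1} : Finset ℕ), b = a.insertIdx j (n + 1, c) := by
    obtain ⟨⟨j, c⟩, hjc, rfl⟩ := Multiset.mem_map.1 hb
    obtain ⟨hj, hc⟩ := mem_product.1 hjc
    exact ⟨j, Nat.lt_succ_iff.1 (mem_range.1 hj), c, hc, rfl⟩
  have hnodup : ((PiSn n).bind (insertions n)).Nodup := by
    refine Multiset.nodup_bind.2 ⟨fun a ha => ?_, (PiSn_nodup n).pairwise fun a ha a' ha' hne => ?_⟩
    · refine Multiset.Nodup.map_on (fun jc hjc jc' hjc' h => ?_) (nodup _)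
      have hj := Nat.lt_succ_iff.1 (mem_range.1 (mem_product.1 hjc).1)
      have hj' := Nat.lt_succ_iff.1 (mem_range.1 (mem_product.1 hjc').1)
      obtain ⟨h1, h2, -⟩ := insertIdx_inj_of_mem_PiSn ha ha hj hj' h
      exact Prod.ext h1 h2
    · refine Multiset.disjoint_left.2 fun hb hb' => hne ?_
      obtain ⟨j, hj, c, -, rfl⟩ := mem_insertions hb
      obtain ⟨j', hj', c', -, h⟩ := mem_insertions hb'
      exact (insertIdx_inj_of_mem_PiSn ha ha' hj hj' h).2.2
  symm
  refine Multiset.eq_of_le_of_card_le ((Multiset.le_iff_subset hnodup).2 fun b hb => ?_) ?_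
  · obtain ⟨a, ha, hb⟩ := Multiset.mem_bind.1 hb
    obtain ⟨j, hj, c, hc, rfl⟩ := mem_insertions hb
    exact insertIdx_mem_PiSn ha hj hc
  · rw [Multiset.card_bind, Function.comp_def]
    simp only [card_insertions, Multiset.map_const', Multiset.sum_replicate, card_PiSn, smul_eq_mul,
      Nat.factorial_succ]
    apply le_of_eq
    ring

end SignedPermutations

section Weights

lemma XX_ne_zero : (XX : K) ≠ 0 := RatFunc.X_ne_zero

lemma XX_ne_one : (XX : K) ≠ 1 := fun h => by
  simpa [XX] using congrArg RatFunc.intDegree h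

def desWeight (d : ℕ → ℕ) (a : CPerm) : K⟦X⟧ := C (alphaD d a * XX ^ (comaj a : ℤ)) * X ^ des a

variable (d : ℕ → ℕ) {a : CPerm} {n : ℕ}

lemma alphaD_insertIdx {j : ℕ} (hj : j ≤ a.length) (p : ℕ × ℕ) :
    alphaD d (a.insertIdx j p) = (if p.2 ≠ 0 then -XX ^ (-(d p.1 : ℤ)) else 1) * alphaD d a := by
  rw [alphaD, alphaD, ((List.perm_insertIdx p a hj).map _).prod_eq, List.map_cons, List.prod_cons]

variable (hlen : a.length = n) (hbound : ∀ p ∈ a, p.1 ≤ n ∧ p.2 ≤ n)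
include hlen hbound

lemma desWeight_insertIdx_max {j : ℕ} (hj : j ≤ n) :
    desWeight d (a.insertIdx j (n + 1, 0)) = desWeight d a *
      (C (XX ^ insertionShift n (DesSet a) j) *
        if insertionShift n (DesSet a) j < des a + 1 then 1 else X) := by
  have hx : ∀ p ∈ (0, 0) :: a, cLt p (n + 1, 0) := by
    intro p hp
    rcases List.mem_cons.1 hp with rfl | hp
    · simp [cLt]
    · have := hbound p hp
      unfold cLt
      omega
  obtain ⟨hdes, hcomaj⟩ := des_comaj_insertIdx_of_max hlen hj hx
  have hiff := insertionShift_le_card_iff (hlen ▸ DesSet_subset_range a) hj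
  rw [desWeight, desWeight, alphaD_insertIdx d (hlen ▸ hj), hdes, hcomaj, if_neg (by simp), one_mul,
    Nat.cast_add, zpow_add₀ XX_ne_zero, zpow_natCast _ (insertionShift _ _ _), des]
  simp only [Nat.lt_succ_iff, hiff]
  split_ifs <;> simp only [map_mul, pow_add, pow_zero, pow_one, mul_one] <;> ring

lemma desWeight_insertIdx_min {j : ℕ} (hj : j ≤ n) :
    desWeight d (a.insertIdx j (n + 1, n + 1)) = -(desWeight d a * C (XX ^ (1 - (d (n + 1) : ℤ))) *
      (C (XX ^ insertionShift n (DesSet a) j) *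
        if insertionShift n (DesSet a) j < des a then 1 else X)) := by
  have hx : ∀ p ∈ (0, 0) :: a, cLt (n + 1, n + 1) p := by
    intro p hp
    rcases List.mem_cons.1 hp with rfl | hp
    · simp [cLt]
    · have := hbound p hp
      unfold cLt
      omega
  obtain ⟨hdes, hcomaj⟩ := des_comaj_insertIdx_of_min hlen hj hx
  have hiff := insertionShift_lt_card_iff (hlen ▸ DesSet_subset_range a) hj
  have hpow : XX ^ (-(d (n + 1) : ℤ)) *
      XX ^ (((comaj a + insertionShift n (DesSet a) j + 1 : ℕ)) : ℤ) =
      XX ^ (comaj a : ℤ) * XX ^ (1 - (d (n + 1) : ℤ)) * XX ^ insertionShift n (DesSet a) j := by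
    rw [← zpow_natCast, ← zpow_add₀ XX_ne_zero, ← zpow_add₀ XX_ne_zero, ← zpow_add₀ XX_ne_zero]
    push_cast
    ring_nf
  rw [desWeight, desWeight, alphaD_insertIdx d (hlen ▸ hj), hdes, hcomaj, if_pos (by simp), des]
  simp only [hiff]
  rw [show -XX ^ (-(d (n + 1) : ℤ)) * alphaD d a *
      XX ^ (((comaj a + insertionShift n (DesSet a) j + 1 : ℕ)) : ℤ) =
      -(alphaD d a * (XX ^ (-(d (n + 1) : ℤ)) *
        XX ^ (((comaj a + insertionShift n (DesSet a) j + 1 : ℕ)) : ℤ))) by ring, hpow]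
  split_ifs <;> simp only [map_neg, map_mul, pow_add, pow_zero, pow_one, mul_one] <;> ring

lemma sum_desWeight_insertions :
    ((insertions n a).map (desWeight d)).sum = desWeight d a *
      (stairSum XX n (des a + 1) - C (XX ^ (1 - (d (n + 1) : ℤ))) * stairSum XX n (des a)) := by
  have hD : DesSet a ⊆ range n := hlen ▸ DesSet_subset_range a
  rw [insertions, Multiset.map_map, Function.comp_def, sum_map_val, sum_product]
  rw [sum_congr rfl fun j hj => by
    rw [sum_pair (Nat.succ_ne_zero n).symm,
      desWeight_insertIdx_max d hlen hbound (Nat.lt_succ_iff.1 (mem_range.1 hj)),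
      desWeight_insertIdx_min d hlen hbound (Nat.lt_succ_iff.1 (mem_range.1 hj))]]
  rw [sum_add_distrib, sum_neg_distrib, ← mul_sum, ← mul_sum,
    sum_insertionShift hD (fun r => C (XX ^ r) * if r < des a + 1 then 1 else X),
    sum_insertionShift hD (fun r => C (XX ^ r) * if r < des a then 1 else X), stairSum, stairSum]
  ring

lemma hadamard_desWeight_mul_geomProd :
    hadamard (desWeight d a * geomProd XX n)
        ((1 - C (XX ^ (1 - (d (n + 1) : ℤ))) * X) * geom 1 * geom XX) =
      ((insertions n a).map (desWeight d)).sum * geomProd XX (n + 1) := by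
  have hdes : des a ≤ n := by simpa [hlen, des] using card_le_card (DesSet_subset_range a)
  rw [sum_desWeight_insertions d hlen hbound, desWeight, mul_assoc, C_mul_hadamard,
    hadamard_X_pow_mul_geomProd XX XX_ne_one hdes]
  ring

end Weights

theorem hadamard_F2d_family_general (n : ℕ) (d : ℕ → ℕ) :
    hadamardProdList ((List.range n).map fun i =>
        (1 - PowerSeries.C (R := K) (XX ^ (1 - (d (i + 1) : ℤ))) * PowerSeries.X) *
          geom (1 : K) * geom XX) =
      ((PiSn n).map fun a =>
          PowerSeries.C (R := K) (alphaD d a * XX ^ (comaj a : ℤ)) *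
            PowerSeries.X ^ des a).sum *
        ∏ i ∈ Finset.range (n + 1), geom (XX ^ (i : ℕ)) := by
  change _ = ((PiSn n).map (desWeight d)).sum * geomProd XX n
  induction n with
  | zero => simp [hadamardProdList, PiSn_zero, desWeight, des, comaj, DesSet, alphaD, geomProd]
  | succ n ih =>
    have step (a : CPerm) (ha : a ∈ PiSn n) := by
      obtain ⟨hlen, -, hent⟩ := mem_PiSn_iff.1 ha
      exact hadamard_desWeight_mul_geomProd d hlen fun p hp => by have := hent p hp; omega
    rw [List.range_succ, List.map_append, List.map_singleton, hadamardProdList_append_singleton, ih,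
      ← Multiset.sum_map_mul_right, multiset_sum_hadamard, Multiset.map_congr rfl step,
      Multiset.sum_map_mul_right, PiSn_succ, Multiset.map_bind, Multiset.sum_bind]

/-- **Corollary.** For `d₁,…,d_n ≥ 1`:
`⊛ᵢ (1 − X^{1−dᵢ}Y)/((1−Y)(1−XY)) =
 (Σ_{a ∈ Π(S_n)} α(a) X^{comaj(a)} Y^{des(a)}) / ((1−Y)(1−XY)⋯(1−XⁿY))`.
(After `X ← q` and rescaling `Y`, this computes the class-counting zeta function
of `F_{2,d₁} × ⋯ × F_{2,d_n}`.) -/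
theorem hadamard_F2d_family (n : ℕ) (hn : 1 ≤ n) (d : ℕ → ℕ)
    (hd : ∀ i ∈ Finset.Icc 1 n, 0 < d i) :
    hadamardProdList ((List.range n).map fun i =>
        (1 - PowerSeries.C (R := K) (XX ^ (1 - (d (i + 1) : ℤ))) * PowerSeries.X) *
          geom (1 : K) * geom XX) =
      ((PiSn n).map fun a =>
          PowerSeries.C (R := K) (alphaD d a * XX ^ (comaj a : ℤ)) *
            PowerSeries.X ^ des a).sum *
        ∏ i ∈ Finset.range (n + 1), geom (XX ^ (i : ℕ)) :=
  hadamard_F2d_family_general n d
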